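/- There is a bijection between the set of ternary trees with n nodes and the set of S-Motzkin paths of length 3n. -/

import Mathlib

/-- The three step types of a Motzkin path: H = (1,0), U = (1,1), D = (1,-1). -/
inductive Step : Type | H | U | D
deriving DecidableEq, Repr

/-- Between every two consecutive H steps there is exactly one U step. -/
def OneUBetweenH (w : List Step) : Prop :=
  ∀ p mid s : List Step, w = p ++ Step.H :: mid ++ Step.H :: s →
    Step.H ∉ mid → mid.count Step.U = 1

/-- The k-th D step occurs after at least k H steps and at least k U steps. -/
def DCond (w : List Step) : Prop :=
  ∀ p s : List Step, w = p ++ Step.D :: s →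
    p.count Step.D + 1 ≤ p.count Step.H ∧ p.count Step.D + 1 ≤ p.count Step.U

/-- A Motzkin path: every prefix has #U ≥ #D, and the total height is 0. -/
def IsMotzkin (w : List Step) : Prop :=
  w.count Step.U = w.count Step.D ∧
  ∀ p : List Step, p <+: w → p.count Step.D ≤ p.count Step.U

/-- An S-Motzkin path of length 3n (original definition): a Motzkin path with n steps
of each type, starting with H, with exactly one U between consecutive H steps,
and where the k-th D occurs after at least k H steps and k U steps. -/
def IsSMotzkin (n : ℕ) (w : List Step) : Prop :=
  IsMotzkin w ∧ w.count Step.H = n ∧ w.count Step.U = n ∧ w.count Step.D = n ∧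
  (w ≠ [] → w.head? = some Step.H) ∧ OneUBetweenH w ∧ DCond w

/-- A ternary tree: either empty, or a node with left, middle and right subtrees. -/
inductive TernaryTree : Type
  | leaf : TernaryTree
  | node : TernaryTree → TernaryTree → TernaryTree → TernaryTree

/-- The number of nodes of a ternary tree. -/
def TernaryTree.size : TernaryTree → ℕ
  | .leaf => 0
  | .node a b c => 1 + a.size + b.size + c.size

/-!
Encode `node a b c` as `H · σ(a) · U · b · D · c`, where `σ` exchanges `H` and `U`. The S-Motzkin
paths of length `3n` are exactly the words with `n` steps of each kind all of whose prefixes satisfy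
`#D ≤ #H`, `#D ≤ #U` and `#U ≤ #H ≤ #U + 1` (the last condition says that `H` and `U` alternate),
and the encoding preserves these inequalities. Conversely, such a nonempty word splits in exactly
one way into this shape: after the first step, the root `D` is the first step at which `D`
outnumbers `H`, and the root `U` is the last step before it at which `U` and `D` balance.
-/

namespace List

variable {α : Type*}

theorem forall_prefix_cons_iff {P : List α → Prop} {a : α} {l : List α} :
    (∀ p, p <+: a :: l → P p) ↔ P [] ∧ ∀ q, q <+: l → P (a :: q) := by
  refine ⟨fun h => ⟨h [] nil_prefix, fun q hq => h _ (cons_prefix_cons.2 ⟨rfl, hq⟩)⟩, ?_⟩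
  rintro ⟨h₀, h⟩ p hp
  rcases prefix_cons_iff.1 hp with rfl | ⟨q, rfl, hq⟩
  exacts [h₀, h q hq]

theorem forall_prefix_append_cons_iff {P : List α → Prop} {l₁ l₂ : List α} {a : α} :
    (∀ p, p <+: l₁ ++ a :: l₂ → P p) ↔
      (∀ p, p <+: l₁ → P p) ∧ ∀ q, q <+: l₂ → P (l₁ ++ a :: q) := by
  refine ⟨fun h => ⟨fun p hp => h p (prefix_append_of_prefix hp),
    fun q hq => h _ (by simpa using hq)⟩, fun ⟨h₁, h₂⟩ p hp => ?_⟩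
  rcases prefix_or_prefix_of_prefix hp (prefix_append l₁ (a :: l₂)) with hp₁ | ⟨q, rfl⟩
  · exact h₁ p hp₁
  rcases prefix_cons_iff.1 ((prefix_append_right_inj l₁).1 hp) with rfl | ⟨q, rfl, hq⟩
  exacts [by simpa using h₁ l₁ prefix_rfl, h₂ q hq]

theorem forall_prefix_map_iff {β : Type*} {P : List β → Prop} {f : α → β} {l : List α} :
    (∀ p, p <+: l.map f → P p) ↔ ∀ q, q <+: l → P (q.map f) := by
  refine ⟨fun h q hq => h _ (hq.map f), fun h p hp => ?_⟩
  obtain ⟨q, hq, rfl⟩ := prefix_map_iff.1 hp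
  exact h q hq

theorem exists_shortest_prefix {P : List α → Prop} {s : List α} (hnil : ¬ P [])
    (hs : ∃ q, q <+: s ∧ P q) :
    ∃ L a C, s = L ++ a :: C ∧ P (L ++ [a]) ∧ ∀ q, q <+: L → ¬ P q := by
  induction s using reverseRecOn with
  | nil => obtain ⟨q, hq, hPq⟩ := hs; exact absurd (prefix_nil.1 hq ▸ hPq) hnil
  | append_singleton s b ih =>
    by_cases hs' : ∃ q, q <+: s ∧ P q
    · obtain ⟨L, a, C, rfl, hLa, hL⟩ := ih hs'
      exact ⟨L, a, C ++ [b], by simp, hLa, hL⟩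
    · push Not at hs'
      obtain ⟨q, hq, hPq⟩ := hs
      rcases prefix_concat_iff.1 hq with rfl | hq
      · exact ⟨s, b, [], rfl, hPq, hs'⟩
      · exact absurd hPq (hs' q hq)

theorem exists_longest_prefix {P : List α → Prop} {s : List α} (hnil : P []) (hs : ¬ P s) :
    ∃ A a B, s = A ++ a :: B ∧ P A ∧ ∀ r, r <+: B → ¬ P (A ++ a :: r) := by
  induction s using reverseRecOn with
  | nil => exact absurd hnil hs
  | append_singleton s b ih =>
    by_cases hs' : P s
    · exact ⟨s, b, [], rfl, hs', by simpa using hs⟩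
    · obtain ⟨A, a, B, rfl, hA, hB⟩ := ih hs'
      refine ⟨A, a, B ++ [b], by simp, hA, fun r hr => ?_⟩
      rcases prefix_concat_iff.1 hr with rfl | hr
      · simpa using hs
      · exact hB r hr

theorem exists_prefix_eq_append_cons_of_length_lt {A B A' B' : List α} {a a' : α}
    (h : A ++ a :: B = A' ++ a' :: B') (hlt : A.length < A'.length) :
    ∃ r, r <+: B ∧ A' = A ++ a :: r := by
  obtain ⟨r, hr⟩ : A ++ [a] <+: A' :=
    prefix_of_prefix_length_le (l₃ := A' ++ a' :: B') (h ▸ by simp) (prefix_append _ _)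
      (by simpa using hlt)
  refine ⟨r, ⟨a' :: B', ?_⟩, by simpa using hr.symm⟩
  subst hr
  simpa using h.symm

theorem eq_of_shortest_prefix {P : List α → Prop} {L C L' C' : List α} {a a' : α}
    (h : L ++ a :: C = L' ++ a' :: C') (hLa : P (L ++ [a])) (hL : ∀ q, q <+: L → ¬ P q)
    (hLa' : P (L' ++ [a'])) (hL' : ∀ q, q <+: L' → ¬ P q) : L = L' ∧ a = a' ∧ C = C' := by
  have hlen : L.length = L'.length := by
    by_contra hne
    rcases Nat.lt_or_gt_of_ne hne with hlt | hlt
    · obtain ⟨r, -, rfl⟩ := exists_prefix_eq_append_cons_of_length_lt h hlt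
      exact hL' _ (by simp) hLa
    · obtain ⟨r, -, rfl⟩ := exists_prefix_eq_append_cons_of_length_lt h.symm hlt
      exact hL _ (by simp) hLa'
  obtain ⟨rfl, h⟩ := append_inj h hlen
  simpa using h

theorem eq_of_longest_prefix {P : List α → Prop} {A B A' B' : List α} {a a' : α}
    (h : A ++ a :: B = A' ++ a' :: B') (hA : P A) (hB : ∀ r, r <+: B → ¬ P (A ++ a :: r))
    (hA' : P A') (hB' : ∀ r, r <+: B' → ¬ P (A' ++ a' :: r)) : A = A' ∧ a = a' ∧ B = B' := by
  have hlen : A.length = A'.length := by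
    by_contra hne
    rcases Nat.lt_or_gt_of_ne hne with hlt | hlt
    · obtain ⟨r, hr, rfl⟩ := exists_prefix_eq_append_cons_of_length_lt h hlt
      exact hB r hr hA'
    · obtain ⟨r, hr, rfl⟩ := exists_prefix_eq_append_cons_of_length_lt h.symm hlt
      exact hB' r hr hA
  obtain ⟨rfl, h⟩ := append_inj h hlen
  simpa using h

end List

namespace Step

def swapHU : Step → Step
  | H => U
  | U => H
  | D => D

theorem swapHU_involutive : Function.Involutive swapHU := by
  rintro (_ | _ | _) <;> rfl

@[simp, grind =] theorem count_H_map_swapHU (l : List Step) : (l.map swapHU).count H = l.count U :=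
  l.count_map_of_injective swapHU swapHU_involutive.injective U

@[simp, grind =] theorem count_U_map_swapHU (l : List Step) : (l.map swapHU).count U = l.count H :=
  l.count_map_of_injective swapHU swapHU_involutive.injective H

@[simp, grind =] theorem count_D_map_swapHU (l : List Step) : (l.map swapHU).count D = l.count D :=
  l.count_map_of_injective swapHU swapHU_involutive.injective D

@[simp] theorem swapHU_comp_swapHU : swapHU ∘ swapHU = id :=
  swapHU_involutive.comp_self

end Step

open Step List

def IsAdmissible (p : List Step) : Prop :=
  p.count D ≤ p.count H ∧ p.count D ≤ p.count U ∧ p.count U ≤ p.count H ∧ p.count H ≤ p.count U + 1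

def IsAdmissiblePath (n : ℕ) (w : List Step) : Prop :=
  w.count H = n ∧ w.count U = n ∧ w.count D = n ∧ ∀ p, p <+: w → IsAdmissible p

theorem exists_eq_H_cons {w : List Step} (hw : ∀ p, p <+: w → IsAdmissible p) (hne : w ≠ []) :
    ∃ s, w = H :: s := by
  obtain ⟨x, s, rfl⟩ := exists_cons_of_ne_nil hne
  have hx := hw [x] (by simp)
  cases x <;> simp_all [IsAdmissible]

theorem DCond.prefix_count_D_le {w : List Step} (hw : DCond w) :
    ∀ p, p <+: w → p.count D ≤ p.count H ∧ p.count D ≤ p.count U := by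
  intro p
  induction p using reverseRecOn with
  | nil => simp
  | append_singleton p x ih =>
    intro hp
    have hp' := ih ((prefix_append p [x]).trans hp)
    cases x
    · grind
    · grind
    · obtain ⟨s, rfl⟩ := hp
      have := hw p s (by simp)
      grind

theorem prefix_count_U_le_H_of_H_cons {m p : List Step} (hm : H ∉ m) (hmU : m.count U ≤ 1)
    (hp : p <+: H :: m) : p.count U ≤ p.count H ∧ p.count H ≤ p.count U + 1 := by
  rcases prefix_cons_iff.1 hp with rfl | ⟨q, rfl, hq⟩
  · simp
  · have hqH : q.count H = 0 := count_eq_zero.2 fun h => hm (hq.subset h)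
    have hqU : q.count U ≤ m.count U := hq.sublist.count_le U
    grind

theorem OneUBetweenH.prefix_count_U_le_H {w : List Step} (hone : OneUBetweenH w)
    (hhead : w ≠ [] → w.head? = some H) (hcount : w.count U = w.count H) :
    ∀ p, p <+: w → p.count U ≤ p.count H ∧ p.count H ≤ p.count U + 1 := by
  induction hlen : w.length using Nat.strong_induction_on generalizing w with
  | _ n ih =>
  rcases w with _ | ⟨x, t⟩
  · intro p hp; simp [prefix_nil.1 hp]
  obtain rfl : x = H := by simpa using hhead
  by_cases hHt : H ∈ t
  · obtain ⟨m, s, hm, rfl, -⟩ := exists_erase_eq hHt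
    have hmU : m.count U = 1 := hone [] m s (by simp) hm
    have hone' : OneUBetweenH (H :: s) := fun p mid s' heq hmid =>
      hone (H :: m ++ p) mid s' (by simp [heq]) hmid
    have hcount' : (H :: s).count U = (H :: s).count H := by grind
    have ih' := ih _ (by simp [← hlen]) hone' (by simp) hcount' rfl
    rw [← cons_append, forall_prefix_append_cons_iff]
    refine ⟨fun p hp => prefix_count_U_le_H_of_H_cons hm hmU.le hp, fun q hq => ?_⟩
    have := ih' (H :: q) (by simpa using hq)
    grind
  · have : t.count U ≤ 1 := by grind [count_eq_zero]
    exact fun p hp => prefix_count_U_le_H_of_H_cons hHt this hp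

theorem IsSMotzkin.isAdmissiblePath {n : ℕ} {w : List Step} (h : IsSMotzkin n w) :
    IsAdmissiblePath n w := by
  obtain ⟨-, hH, hU, hD, hhead, hone, hdc⟩ := h
  refine ⟨hH, hU, hD, fun p hp => ?_⟩
  obtain ⟨h₁, h₂⟩ := hdc.prefix_count_D_le p hp
  obtain ⟨h₃, h₄⟩ := hone.prefix_count_U_le_H hhead (hU.trans hH.symm) p hp
  exact ⟨h₁, h₂, h₃, h₄⟩

theorem IsAdmissiblePath.isSMotzkin {n : ℕ} {w : List Step} (h : IsAdmissiblePath n w) :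
    IsSMotzkin n w := by
  obtain ⟨hH, hU, hD, hw⟩ := h
  refine ⟨⟨hU.trans hD.symm, fun p hp => (hw p hp).2.1⟩, hH, hU, hD, ?_, ?_, ?_⟩
  · intro hne
    obtain ⟨s, rfl⟩ := exists_eq_H_cons hw hne
    rfl
  · rintro p m s rfl hm
    have h₀ := hw p (by simp)
    have h₁ := hw (p ++ [H]) (by simp)
    have h₂ := hw (p ++ H :: m) (by simp)
    have h₃ := hw (p ++ H :: m ++ [H]) (by simp)
    grind [IsAdmissible]
  · rintro p s rfl
    have := hw (p ++ [D]) (by simp)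
    grind [IsAdmissible]

theorem isSMotzkin_iff_isAdmissiblePath {n : ℕ} {w : List Step} :
    IsSMotzkin n w ↔ IsAdmissiblePath n w :=
  ⟨IsSMotzkin.isAdmissiblePath, IsAdmissiblePath.isSMotzkin⟩

theorem IsAdmissiblePath.node {i j k : ℕ} {x y z : List Step} (hx : IsAdmissiblePath i x)
    (hy : IsAdmissiblePath j y) (hz : IsAdmissiblePath k z) :
    IsAdmissiblePath (i + j + k + 1) (H :: (x.map swapHU ++ U :: (y ++ D :: z))) := by
  obtain ⟨hxH, hxU, hxD, hx⟩ := hx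
  obtain ⟨hyH, hyU, hyD, hy⟩ := hy
  obtain ⟨hzH, hzU, hzD, hz⟩ := hz
  refine ⟨by grind, by grind, by grind, ?_⟩
  simp only [forall_prefix_cons_iff, forall_prefix_append_cons_iff, forall_prefix_map_iff]
  refine ⟨by simp [IsAdmissible], fun q hq => ?_, fun r hr => ?_, fun t ht => ?_⟩
  · have := hx q hq
    grind [IsAdmissible]
  · have := hy r hr
    grind [IsAdmissible]
  · have := hz t ht
    grind [IsAdmissible]

def IsNodeSplit (A B : List Step) : Prop :=
  (A ++ U :: B ++ [D]).count H < (A ++ U :: B ++ [D]).count D ∧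
    (∀ q, q <+: A ++ U :: B → ¬ q.count H < q.count D) ∧
    A.count U = A.count D ∧ ∀ r, r <+: B → ¬ (A ++ U :: r).count U = (A ++ U :: r).count D

theorem IsNodeSplit.unique {A B C A' B' C' : List Step}
    (h : IsNodeSplit A B) (h' : IsNodeSplit A' B')
    (heq : A ++ U :: (B ++ D :: C) = A' ++ U :: (B' ++ D :: C')) : A = A' ∧ B = B' ∧ C = C' := by
  obtain ⟨hL, -, rfl⟩ := eq_of_shortest_prefix (P := fun q => q.count H < q.count D)
    (by simpa using heq) h.1 h.2.1 h'.1 h'.2.1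
  obtain ⟨rfl, -, rfl⟩ := eq_of_longest_prefix (P := fun q => q.count U = q.count D)
    hL h.2.2.1 h.2.2.2 h'.2.2.1 h'.2.2.2
  exact ⟨rfl, rfl, rfl⟩

theorem exists_isNodeSplit {s : List Step} (hs : ∀ q, q <+: s → IsAdmissible (H :: q))
    (hHD : s.count H < s.count D) : ∃ A B C, s = A ++ U :: (B ++ D :: C) ∧ IsNodeSplit A B := by
  obtain ⟨L, a, C, rfl, hLa, hL⟩ := exists_shortest_prefix
    (P := fun q => q.count H < q.count D) (by simp) ⟨s, prefix_rfl, hHD⟩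
  obtain ⟨rfl, hLHD⟩ : a = D ∧ L.count H = L.count D := by
    have := hL L prefix_rfl
    cases a <;> grind
  have hLU : L.count U = L.count D + 1 := by
    have h₁ := hs L (by simp)
    have h₂ := hs (L ++ [D]) (by simp)
    grind [IsAdmissible]
  obtain ⟨A, b, B, rfl, hA, hB⟩ := exists_longest_prefix
    (P := fun q => q.count U = q.count D) (s := L) (by simp) (by omega)
  obtain rfl : b = U := by
    have h₁ := hs (A ++ [b]) (by simp)
    have h₂ := hB [] nil_prefix
    cases b <;> grind [IsAdmissible]
  exact ⟨A, B, C, by simp, hLa, hL, hA, hB⟩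

theorem IsAdmissiblePath.isNodeSplit {i j : ℕ} {x y : List Step} (hx : IsAdmissiblePath i x)
    (hy : IsAdmissiblePath j y) : IsNodeSplit (x.map swapHU) y := by
  obtain ⟨hxH, hxU, hxD, hx⟩ := hx
  obtain ⟨hyH, hyU, hyD, hy⟩ := hy
  refine ⟨by grind, ?_, by grind, fun r hr => ?_⟩
  · simp only [forall_prefix_append_cons_iff, forall_prefix_map_iff]
    refine ⟨fun q hq => ?_, fun r hr => ?_⟩
    · have := hx q hq
      grind [IsAdmissible]
    · have := hy r hr
      grind [IsAdmissible]
  · have := hy r hr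
    grind [IsAdmissible]

theorem IsAdmissiblePath.exists_node {n : ℕ} {w : List Step} (h : IsAdmissiblePath (n + 1) w) :
    ∃ i j k x y z, i + j + k = n ∧ IsAdmissiblePath i x ∧ IsAdmissiblePath j y ∧
      IsAdmissiblePath k z ∧ w = H :: (x.map swapHU ++ U :: (y ++ D :: z)) := by
  obtain ⟨hH, hU, hD, hw⟩ := h
  obtain ⟨s, rfl⟩ := exists_eq_H_cons hw (by rintro rfl; simp at hH)
  replace hw := (forall_prefix_cons_iff.1 hw).2
  obtain ⟨A, B, C, rfl, hLa, hL, hA, hB⟩ := exists_isNodeSplit hw (by grind)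
  simp only [forall_prefix_append_cons_iff] at hw hL
  obtain ⟨hwA, hwB, hwC⟩ := hw
  obtain ⟨hLA, hLB⟩ := hL
  have hAc : A.count H = A.count D ∧ A.count U = A.count D := by
    have h₁ := hwA A prefix_rfl
    have h₂ := hwB [] nil_prefix
    grind [IsAdmissible]
  have hBc : B.count H = B.count D ∧ B.count U = B.count D := by
    have h₁ := hwB B prefix_rfl
    have h₂ := hwC [] nil_prefix
    grind [IsAdmissible]
  refine ⟨A.count D, B.count D, C.count D, A.map swapHU, B, C, by grind,
    ⟨by grind, by grind, by simp, ?_⟩, ⟨hBc.1, hBc.2, rfl, ?_⟩,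
    ⟨by grind, by grind, rfl, ?_⟩, by simp⟩
  · rw [forall_prefix_map_iff]
    intro q hq
    have h₁ := hwA q hq
    have h₂ := hLA q hq
    grind [IsAdmissible]
  · intro r hr
    have h₁ := hwB r hr
    have h₂ := hLB r hr
    have h₃ := hB r hr
    grind [IsAdmissible]
  · intro t ht
    have := hwC t ht
    grind [IsAdmissible]

namespace TernaryTree

def toPath : TernaryTree → List Step
  | leaf => []
  | node a b c => H :: ((toPath a).map swapHU ++ U :: (toPath b ++ D :: toPath c))

theorem isAdmissiblePath_toPath : ∀ T : TernaryTree, IsAdmissiblePath T.size T.toPath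
  | leaf => ⟨rfl, rfl, rfl, fun p hp => by simp [prefix_nil.1 hp, IsAdmissible]⟩
  | node a b c => by
    rw [size, show 1 + a.size + b.size + c.size = a.size + b.size + c.size + 1 by omega]
    exact (isAdmissiblePath_toPath a).node (isAdmissiblePath_toPath b) (isAdmissiblePath_toPath c)

theorem toPath_injective : Function.Injective toPath := by
  intro T T' h
  induction T generalizing T' with
  | leaf => cases T' <;> simp_all [toPath]
  | node a b c iha ihb ihc =>
    cases T' with
    | leaf => simp [toPath] at h
    | node a' b' c' =>
      simp only [toPath, cons.injEq, true_and] at h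
      obtain ⟨ha, hb, hc⟩ :=
        ((isAdmissiblePath_toPath a).isNodeSplit (isAdmissiblePath_toPath b)).unique
          ((isAdmissiblePath_toPath a').isNodeSplit (isAdmissiblePath_toPath b')) h
      rw [iha ((map_injective_iff.2 swapHU_involutive.injective) ha), ihb hb, ihc hc]

theorem exists_toPath_eq (n : ℕ) {w : List Step} (hw : IsAdmissiblePath n w) :
    ∃ T : TernaryTree, T.size = n ∧ T.toPath = w := by
  induction n using Nat.strong_induction_on generalizing w with
  | _ n ih =>
  rcases n with _ | n
  · refine ⟨leaf, rfl, ?_⟩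
    by_contra hne
    obtain ⟨s, rfl⟩ := exists_eq_H_cons hw.2.2.2 (Ne.symm hne)
    simpa using hw.1
  · obtain ⟨i, j, k, x, y, z, hn, hx, hy, hz, rfl⟩ := hw.exists_node
    obtain ⟨a, rfl, rfl⟩ := ih i (by omega) hx
    obtain ⟨b, rfl, rfl⟩ := ih j (by omega) hy
    obtain ⟨c, rfl, rfl⟩ := ih k (by omega) hz
    exact ⟨node a b c, by simp only [size]; omega, rfl⟩

end TernaryTree

theorem ternary_trees_equiv_smotzkin (n : ℕ) :
    Nonempty ({T : TernaryTree // T.size = n} ≃ {w : List Step // IsSMotzkin n w}) := by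
  refine ⟨Equiv.ofBijective (fun T => ⟨T.1.toPath, isSMotzkin_iff_isAdmissiblePath.2
    (by simpa only [T.2] using T.1.isAdmissiblePath_toPath)⟩) ⟨?_, ?_⟩⟩
  · exact fun T T' h => Subtype.ext (TernaryTree.toPath_injective (congrArg Subtype.val h))
  · rintro ⟨w, hw⟩
    obtain ⟨T, hT, rfl⟩ := TernaryTree.exists_toPath_eq n (isSMotzkin_iff_isAdmissiblePath.1 hw)
    exact ⟨⟨T, hT⟩, rfl⟩
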